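/- arXiv:1711.07082 — 3 statements merged into one kernel-verified Lean document; each statement's English description precedes it below -/
import Mathlib

section
/- Let f : Z → Y be C¹ near z̄ with f(z̄) ∈ Ω, Ω closed convex, and suppose metric subregularity of z ↦ f(z) − Ω at (z̄, 0) with modulus κ. Then every regular normal z* ∈ N̂_{f⁻¹(Ω)}(z̄) can be represented as z* = ∇f(z̄)* y* with y* ∈ N_Ω(f(z̄)) and ‖y*‖ ≤ κ‖z*‖. -/
/-!
Exact penalization turns the regular normal inequality on `f⁻¹(Ω)` into
`⟪z*, z - z̄⟫ ≤ κ‖z*‖ d(f z, Ω) + o(‖z - z̄‖)`. Moving along rays `z̄ + s h` and linearizing `f`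
gives `⟪z*, h⟫ ≤ κ‖z*‖ d(∇f(z̄) h, K)`, with `K` the cone of feasible directions of the convex
set `Ω` at `f z̄`. Distance to a convex cone is sublinear, so Hahn–Banach extends
`∇f(z̄) h ↦ ⟪z*, h⟫` to a functional `⟪y*, ·⟫ ≤ κ‖z*‖ d(·, K)`. This bound vanishes on
`Ω - f z̄ ⊆ K`, so `y* ∈ N_Ω(f z̄)`, and it is at most `κ‖z*‖ ‖·‖`, so `‖y*‖ ≤ κ‖z*‖`.
-/

open Set Filter Topology Metric
open scoped Pointwise

variable {Z : Type*} [NormedAddCommGroup Z] [InnerProductSpace ℝ Z]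

/-- The normal cone of convex analysis to `Ω` at `y`. -/
def normalCone (Ω : Set Z) (y : Z) : Set Z :=
  {w | ∀ y' ∈ Ω, @inner ℝ _ _ w (y' - y) ≤ 0}

/-- The regular (Fréchet) normal cone. -/
def regNormalCone (C : Set Z) (z0 : Z) : Set Z :=
  {v | ∀ ε > (0 : ℝ), ∀ᶠ z in 𝓝[C] z0, @inner ℝ _ _ v (z - z0) ≤ ε * ‖z - z0‖}

open scoped RealInnerProductSpace

theorem le_of_forall_pos_le_add_mul {a b M : ℝ} (h : ∀ ε > 0, a ≤ b + ε * M) : a ≤ b := by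
  have hlim : Tendsto (fun ε : ℝ => b + ε * M) (𝓝[>] 0) (𝓝 b) := by
    have : Continuous fun ε : ℝ => b + ε * M := by fun_prop
    simpa using (this.tendsto 0).mono_left nhdsWithin_le_nhds
  exact ge_of_tendsto hlim (eventually_nhdsWithin_of_forall h)

theorem le_mul_infDist_of_forall {E : Type*} [PseudoMetricSpace E] {s : Set E} {x : E}
    {a c : ℝ} (hc : 0 ≤ c) (hs : s.Nonempty) (h : ∀ y ∈ s, a ≤ c * dist x y) :
    a ≤ c * infDist x s := by
  rcases hc.eq_or_lt with rfl | hc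
  · obtain ⟨y, hy⟩ := hs
    simpa using h y hy
  · rw [← div_le_iff₀' hc, le_infDist hs]
    intro y hy
    rw [div_le_iff₀' hc]
    exact h y hy

theorem norm_le_of_forall_inner_le {E : Type*} [NormedAddCommGroup E] [InnerProductSpace ℝ E]
    {x : E} {c : ℝ} (hc : 0 ≤ c) (h : ∀ y, ⟪x, y⟫ ≤ c * ‖y‖) : ‖x‖ ≤ c := by
  rcases (norm_nonneg x).eq_or_lt with hx | hx
  · rwa [← hx]
  · refine le_of_mul_le_mul_right ?_ hx
    simpa [real_inner_self_eq_norm_sq, sq] using h x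

namespace ConvexCone

variable {E : Type*} [NormedAddCommGroup E] [NormedSpace ℝ E] (K : ConvexCone ℝ E)

theorem smul_coe_eq {c : ℝ} (hc : 0 < c) : c • (K : Set E) = K := by
  ext x
  rw [mem_smul_set_iff_inv_smul_mem₀ hc.ne', SetLike.mem_coe, SetLike.mem_coe,
    K.smul_mem_iff (inv_pos.2 hc)]

theorem infDist_smul {c : ℝ} (hc : 0 < c) (x : E) :
    infDist (c • x) K = c * infDist x K := by
  simpa [K.smul_coe_eq hc, Real.norm_of_nonneg hc.le] using infDist_smul₀ hc.ne' (K : Set E) x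

theorem infDist_add_le (x y : E) : infDist (x + y) K ≤ infDist x K + infDist y K := by
  rcases (K : Set E).eq_empty_or_nonempty with hK | hK
  · simp [hK]
  refine le_of_forall_pos_lt_add fun ε hε => ?_
  obtain ⟨u, hu, hxu⟩ := (infDist_lt_iff hK).1 (lt_add_of_pos_right (infDist x K) (half_pos hε))
  obtain ⟨v, hv, hyv⟩ := (infDist_lt_iff hK).1 (lt_add_of_pos_right (infDist y K) (half_pos hε))
  calc infDist (x + y) K ≤ dist (x + y) (u + v) := infDist_le_dist_of_mem (K.add_mem hu hv)
    _ ≤ dist x u + dist y v := dist_add_add_le _ _ _ _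
    _ < infDist x K + infDist y K + ε := by linarith

end ConvexCone

theorem exists_comp_eq_of_le_sublinear {E F : Type*} [AddCommGroup E] [Module ℝ E]
    [AddCommGroup F] [Module ℝ F] (A : E →ₗ[ℝ] F) (φ : E →ₗ[ℝ] ℝ) (N : F → ℝ)
    (N_hom : ∀ c : ℝ, 0 < c → ∀ y, N (c • y) = c * N y) (N_add : ∀ x y, N (x + y) ≤ N x + N y)
    (hφ : ∀ x, φ x ≤ N (A x)) : ∃ g : F →ₗ[ℝ] ℝ, g ∘ₗ A = φ ∧ ∀ y, g y ≤ N y := by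
  have N_zero : N 0 = 0 := by
    have h := N_hom 2 two_pos 0
    rw [smul_zero] at h
    linarith
  have hker : LinearMap.ker A ≤ LinearMap.ker φ := fun x hx => by
    rw [LinearMap.mem_ker] at hx ⊢
    have h₁ := hφ x
    have h₂ := hφ (-x)
    rw [hx, N_zero] at h₁
    rw [map_neg, map_neg, hx, neg_zero, N_zero] at h₂
    linarith
  -- `φ` factors through the range of `A`, where it is dominated by `N`
  let φ' : LinearMap.range A →ₗ[ℝ] ℝ :=
    (LinearMap.ker A).liftQ φ hker ∘ₗ A.quotKerEquivRange.symm.toLinearMap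
  have hφ' : ∀ x, φ' ⟨A x, LinearMap.mem_range_self A x⟩ = φ x := fun x => by
    simp [φ', A.quotKerEquivRange_symm_apply_image]
  obtain ⟨g, hgφ, hgN⟩ := exists_extension_of_le_sublinear ⟨LinearMap.range A, φ'⟩ N N_hom N_add
    (by rintro ⟨_, x, rfl⟩; exact (hφ' x).trans_le (hφ x))
  exact ⟨g, LinearMap.ext fun x => (hgφ ⟨A x, LinearMap.mem_range_self A x⟩).trans (hφ' x), hgN⟩

section FeasibleCone

variable {E : Type*} [AddCommGroup E] [Module ℝ E] {Ω : Set E} {y : E}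

variable (Ω y) in
def feasibleCone : ConvexCone ℝ E := ConvexCone.hull ℝ (Ω - {y})

theorem sub_mem_feasibleCone {y' : E} (hy' : y' ∈ Ω) : y' - y ∈ feasibleCone Ω y :=
  ConvexCone.subset_hull (sub_mem_sub hy' rfl)

theorem zero_mem_feasibleCone (hy : y ∈ Ω) : 0 ∈ feasibleCone Ω y := by
  simpa using sub_mem_feasibleCone (y := y) hy

theorem eventually_add_smul_mem_of_mem_feasibleCone (hΩ : Convex ℝ Ω) (hy : y ∈ Ω) {k : E}
    (hk : k ∈ feasibleCone Ω y) : ∀ᶠ s in 𝓝[>] (0 : ℝ), y + s • k ∈ Ω := by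
  rw [feasibleCone, ConvexCone.mem_hull_of_convex (hΩ.sub (convex_singleton y))] at hk
  obtain ⟨r, hr, _, ⟨ω, hω, _, rfl, rfl⟩, rfl⟩ := hk
  filter_upwards [Ioo_mem_nhdsGT (inv_pos.2 hr)] with s ⟨hs0, hsr⟩
  rw [smul_smul]
  refine hΩ.add_smul_sub_mem hy hω ⟨by positivity, ?_⟩
  calc s * r ≤ r⁻¹ * r := by gcongr
    _ = 1 := inv_mul_cancel₀ hr.ne'

end FeasibleCone

theorem eventually_inner_sub_le_of_mem_regNormalCone {C : Set Z} {z0 zs : Z}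
    (hzs : zs ∈ regNormalCone C z0) (hz0 : z0 ∈ C) {ψ : Z → ℝ}
    (hψ : ∀ᶠ z in 𝓝 z0, infDist z C ≤ ψ z) {ε : ℝ} (hε : 0 < ε) :
    ∀ᶠ z in 𝓝 z0, ⟪zs, z - z0⟫ ≤ ‖zs‖ * ψ z + ε * ‖z - z0‖ := by
  set ε' := min 1 (ε / (3 + ‖zs‖))
  have hε' : 0 < ε' := lt_min one_pos (by positivity)
  have hε'ε : ε' * (3 + ‖zs‖) ≤ ε :=
    (le_div_iff₀ (by positivity)).1 (min_le_right _ _)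
  obtain ⟨r, hr, hball⟩ := Metric.mem_nhdsWithin_iff.1 (hzs ε' hε')
  filter_upwards [hψ, ball_mem_nhds z0 (by positivity : 0 < r / 3)] with z hzψ hzr
  rcases eq_or_ne z z0 with rfl | hz
  · simpa using mul_nonneg (norm_nonneg zs) (infDist_nonneg.trans hzψ)
  -- compare `z` with a near-closest point `w` of `C`, where the regular normal inequality applies
  have hzz0 : 0 < ‖z - z0‖ := norm_pos_iff.2 (sub_ne_zero.2 hz)
  obtain ⟨w, hwC, hzw⟩ := (infDist_lt_iff ⟨z0, hz0⟩).1
    (lt_add_of_pos_right (infDist z C) (mul_pos hε' hzz0))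
  have hzC : infDist z C ≤ ‖z - z0‖ := by
    simpa [dist_eq_norm] using infDist_le_dist_of_mem (x := z) hz0
  rw [dist_eq_norm] at hzw
  have hwz0 : ‖w - z0‖ ≤ 3 * ‖z - z0‖ := by
    have : ε' ≤ 1 := min_le_left _ _
    calc ‖w - z0‖ ≤ ‖z - w‖ + ‖z - z0‖ := by
          simpa [norm_sub_rev z w] using norm_sub_le_norm_sub_add_norm_sub w z z0
      _ ≤ 3 * ‖z - z0‖ := by nlinarith
  have hw : ⟪zs, w - z0⟫ ≤ ε' * ‖w - z0‖ := by
    refine hball ⟨?_, hwC⟩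
    rw [mem_ball, dist_eq_norm]
    rw [mem_ball, dist_eq_norm] at hzr
    linarith
  calc ⟪zs, z - z0⟫ = ⟪zs, w - z0⟫ + ⟪zs, z - w⟫ := by rw [← inner_add_right, sub_add_sub_cancel']
    _ ≤ ε' * (3 * ‖z - z0‖) + ‖zs‖ * (ψ z + ε' * ‖z - z0‖) := by
        gcongr
        · exact hw.trans (by gcongr)
        · exact (real_inner_le_norm _ _).trans (by gcongr; linarith)
    _ = ‖zs‖ * ψ z + ε' * (3 + ‖zs‖) * ‖z - z0‖ := by ring
    _ ≤ ‖zs‖ * ψ z + ε * ‖z - z0‖ := by gcongr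

section Linearization

variable {Y : Type*} [NormedAddCommGroup Y] [NormedSpace ℝ Y] {f : Z → Y} {A : Z →L[ℝ] Y}
  {z0 zs : Z} {Ω : Set Y} {c : ℝ}

theorem inner_le_mul_norm_sub_of_hasFDerivAt (hc : 0 ≤ c) (hA : HasFDerivAt f A z0)
    (hpen : ∀ ε > 0, ∀ᶠ z in 𝓝 z0, ⟪zs, z - z0⟫ ≤ c * infDist (f z) Ω + ε * ‖z - z0‖)
    (h : Z) {k : Y} (hk : ∀ᶠ s in 𝓝[>] (0 : ℝ), f z0 + s • k ∈ Ω) :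
    ⟪zs, h⟫ ≤ c * ‖A h - k‖ := by
  refine le_of_forall_pos_le_add_mul (M := (c + 1) * ‖h‖) fun ε hε => ?_
  have hsmul : Tendsto (fun s : ℝ => s • h) (𝓝[>] 0) (𝓝 0) := by
    have : Continuous fun s : ℝ => s • h := by fun_prop
    simpa using (this.tendsto 0).mono_left nhdsWithin_le_nhds
  have hline : Tendsto (fun s : ℝ => z0 + s • h) (𝓝[>] 0) (𝓝 z0) := by
    simpa using hsmul.const_add z0
  obtain ⟨s, hs, hpen_s, hlin_s, hk_s⟩ := (eventually_mem_nhdsWithin.and <|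
    (hline.eventually (hpen ε hε)).and <|
    (hsmul.eventually ((hasFDerivAt_iff_isLittleO_nhds_zero.1 hA).def hε)).and hk).exists
  have hs : (0 : ℝ) < s := hs
  have hdist : infDist (f (z0 + s • h)) Ω ≤ s * (ε * ‖h‖ + ‖A h - k‖) :=
    calc infDist (f (z0 + s • h)) Ω ≤ dist (f (z0 + s • h)) (f z0 + s • k) :=
          infDist_le_dist_of_mem hk_s
      _ = ‖(f (z0 + s • h) - f z0 - A (s • h)) + s • (A h - k)‖ := by
          rw [dist_eq_norm, map_smul, smul_sub]
          congr 1
          abel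
      _ ≤ ε * ‖s • h‖ + ‖s • (A h - k)‖ := norm_add_le_of_le hlin_s le_rfl
      _ = s * (ε * ‖h‖ + ‖A h - k‖) := by
          rw [norm_smul, norm_smul, Real.norm_of_nonneg hs.le]
          ring
  have hscaled : s * ⟪zs, h⟫ ≤ s * (c * ‖A h - k‖ + ε * ((c + 1) * ‖h‖)) :=
    calc s * ⟪zs, h⟫ = ⟪zs, z0 + s • h - z0⟫ := by
          rw [add_sub_cancel_left, real_inner_smul_right]
      _ ≤ c * infDist (f (z0 + s • h)) Ω + ε * ‖z0 + s • h - z0‖ := hpen_s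
      _ ≤ c * (s * (ε * ‖h‖ + ‖A h - k‖)) + ε * (s * ‖h‖) := by
          rw [add_sub_cancel_left, norm_smul, Real.norm_of_nonneg hs.le]
          gcongr
      _ = s * (c * ‖A h - k‖ + ε * ((c + 1) * ‖h‖)) := by ring
  exact le_of_mul_le_mul_left hscaled hs

theorem inner_le_mul_infDist_feasibleCone (hc : 0 ≤ c) (hA : HasFDerivAt f A z0)
    (hΩ : Convex ℝ Ω) (hfz : f z0 ∈ Ω)
    (hpen : ∀ ε > 0, ∀ᶠ z in 𝓝 z0, ⟪zs, z - z0⟫ ≤ c * infDist (f z) Ω + ε * ‖z - z0‖)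
    (h : Z) : ⟪zs, h⟫ ≤ c * infDist (A h) (feasibleCone Ω (f z0)) :=
  le_mul_infDist_of_forall hc ⟨0, zero_mem_feasibleCone hfz⟩ fun k hk => by
    rw [dist_eq_norm]
    exact inner_le_mul_norm_sub_of_hasFDerivAt hc hA hpen h
      (eventually_add_smul_mem_of_mem_feasibleCone hΩ hfz hk)

end Linearization

section Representation

variable {Y : Type*} [NormedAddCommGroup Y] [InnerProductSpace ℝ Y] {Ω : Set Y} {y ys : Y} {c : ℝ}

theorem mem_normalCone_of_inner_le_mul_infDist
    (h : ∀ v, ⟪ys, v⟫ ≤ c * infDist v (feasibleCone Ω y)) : ys ∈ normalCone Ω y :=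
  fun y' hy' => by
    simpa [infDist_zero_of_mem (sub_mem_feasibleCone hy')] using h (y' - y)

theorem norm_le_of_inner_le_mul_infDist (hc : 0 ≤ c) (hy : y ∈ Ω)
    (h : ∀ v, ⟪ys, v⟫ ≤ c * infDist v (feasibleCone Ω y)) : ‖ys‖ ≤ c := by
  refine norm_le_of_forall_inner_le hc fun v => (h v).trans ?_
  gcongr
  simpa using infDist_le_dist_of_mem (x := v) (zero_mem_feasibleCone hy)

theorem exists_adjoint_eq_of_inner_le_mul_infDist [CompleteSpace Z] [FiniteDimensional ℝ Y]
    (A : Z →L[ℝ] Y) (K : ConvexCone ℝ Y) {zs : Z} (hc : 0 ≤ c)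
    (h : ∀ v, ⟪zs, v⟫ ≤ c * infDist (A v) K) :
    ∃ ys : Y, zs = ContinuousLinearMap.adjoint A ys ∧ ∀ v, ⟪ys, v⟫ ≤ c * infDist v K := by
  obtain ⟨g, hgA, hgK⟩ := exists_comp_eq_of_le_sublinear (A : Z →ₗ[ℝ] Y) (innerₗ Z zs)
    (fun v => c * infDist v K) (fun r hr v => by simp only [K.infDist_smul hr]; ring)
    (fun v w => by simpa only [mul_add] using mul_le_mul_of_nonneg_left (K.infDist_add_le v w) hc)
    h
  let ys := (InnerProductSpace.toDual ℝ Y).symm (LinearMap.toContinuousLinearMap g)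
  have hys : ∀ v, ⟪ys, v⟫ = g v := fun v => InnerProductSpace.toDual_symm_apply
  refine ⟨ys, ext_inner_right ℝ fun v => ?_, fun v => (hys v).trans_le (hgK v)⟩
  rw [ContinuousLinearMap.adjoint_inner_left, hys]
  exact (LinearMap.congr_fun hgA v).symm

end Representation

theorem regular_normal_representation_general
    {Z Y : Type*} [NormedAddCommGroup Z] [InnerProductSpace ℝ Z] [FiniteDimensional ℝ Z]
    [NormedAddCommGroup Y] [InnerProductSpace ℝ Y] [FiniteDimensional ℝ Y]
    (f : Z → Y) (z0 : Z) (hf : ContDiffAt ℝ 1 f z0)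
    (Ω : Set Y) (hΩconv : Convex ℝ Ω) (hfz : f z0 ∈ Ω)
    (κ : ℝ) (hκ : 0 ≤ κ)
    (hsub : ∀ᶠ z in 𝓝 z0, Metric.infDist z (f ⁻¹' Ω) ≤ κ * Metric.infDist (f z) Ω) :
    ∀ zs ∈ regNormalCone (f ⁻¹' Ω) z0,
      ∃ ys ∈ normalCone Ω (f z0),
        zs = ContinuousLinearMap.adjoint (fderiv ℝ f z0) ys ∧ ‖ys‖ ≤ κ * ‖zs‖ := by
  intro zs hzs
  have hc : 0 ≤ κ * ‖zs‖ := by positivity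
  have hpen : ∀ ε > 0, ∀ᶠ z in 𝓝 z0,
      ⟪zs, z - z0⟫ ≤ κ * ‖zs‖ * infDist (f z) Ω + ε * ‖z - z0‖ := fun ε hε => by
    simpa only [mul_left_comm, mul_assoc] using
      eventually_inner_sub_le_of_mem_regNormalCone hzs hfz hsub hε
  obtain ⟨ys, hzs_eq, hys⟩ := exists_adjoint_eq_of_inner_le_mul_infDist (fderiv ℝ f z0)
    (feasibleCone Ω (f z0)) hc <|
    inner_le_mul_infDist_feasibleCone hc (hf.differentiableAt one_ne_zero).hasFDerivAt hΩconv
      hfz hpen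
  exact ⟨ys, mem_normalCone_of_inner_le_mul_infDist hys, hzs_eq,
    norm_le_of_inner_le_mul_infDist hc hfz hys⟩

/-- under metric subregularity of `z ↦ f(z) - Ω` at `(z̄, 0)`
with modulus `κ`, every regular normal `z* ∈ N̂_{f⁻¹(Ω)}(z̄)` can be written as
`z* = ∇f(z̄)* y*` with `y* ∈ N_Ω(f z̄)` and `‖y*‖ ≤ κ ‖z*‖`. -/
theorem regular_normal_representation
    {Z Y : Type*} [NormedAddCommGroup Z] [InnerProductSpace ℝ Z] [FiniteDimensional ℝ Z]
    [NormedAddCommGroup Y] [InnerProductSpace ℝ Y] [FiniteDimensional ℝ Y]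
    (f : Z → Y) (z0 : Z) (hf : ContDiffAt ℝ 1 f z0)
    (Ω : Set Y) (hΩclosed : IsClosed Ω) (hΩconv : Convex ℝ Ω) (hfz : f z0 ∈ Ω)
    (κ : ℝ) (hκ : 0 ≤ κ)
    (hsub : ∀ᶠ z in 𝓝 z0, Metric.infDist z (f ⁻¹' Ω) ≤ κ * Metric.infDist (f z) Ω) :
    ∀ zs ∈ regNormalCone (f ⁻¹' Ω) z0,
      ∃ ys ∈ normalCone Ω (f z0),
        zs = ContinuousLinearMap.adjoint (fderiv ℝ f z0) ys ∧ ‖ys‖ ≤ κ * ‖zs‖ :=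
  regular_normal_representation_general f z0 hf Ω hΩconv hfz κ hκ hsub
end

section
/- Let K ⊆ E be a polyhedral closed convex cone in a finite-dimensional space and A : X → E a linear map. Suppose that the set-valued mapping b* ↦ S(b*) := {μ ∈ K* ∩ {s}^⊥ : A* μ = b*} has nonempty values on its domain, where s ∈ K is fixed and K* ∩ {s}^⊥ is a face of the polyhedral cone K*. Then S is Lipschitz continuous with respect to the Hausdorff distance on its domain: there is L > 0 such that for all b₁*, b₂* in the domain of S, S(b₁*) ⊆ S(b₂*) + L‖b₁* − b₂*‖·B. -/
open Set
open scoped Pointwise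

variable {E : Type*} [NormedAddCommGroup E] [InnerProductSpace ℝ E]

/-- The polar cone `K* = {μ : ⟪μ, k⟫ ≤ 0 for all k ∈ K}`. -/
def polarCone (K : Set E) : Set E := {μ | ∀ k ∈ K, @inner ℝ _ _ μ k ≤ 0}

/-!
Project `μ₁ ∈ S b₁` onto the polyhedron `S b₂`, getting `μ₂`. The residual `g = μ₁ - μ₂` lies in
the normal cone of `S b₂` at `μ₂`, which by Farkas' lemma is the conic hull of the normals of the
active constraints, and by the conic Carathéodory theorem `g` is already a nonnegative combination
`∑ cⱼ vⱼ` of linearly independent ones. The constraint normals are the generators of `K`, `±s`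
and `±A eₖ` for an orthonormal basis `(eₖ)` of `X`; as `⟪A eₖ, g⟫ = ⟪eₖ, b₁ - b₂⟫`, each active
one has `⟪vⱼ, g⟫ ≤ ‖b₁ - b₂‖`. Linear independence bounds `∑ cⱼ ≤ C ‖g‖`, so
`‖g‖² = ∑ cⱼ ⟪vⱼ, g⟫ ≤ C ‖g‖ ‖b₁ - b₂‖`. There are finitely many such subfamilies, so `C` is
uniform: this is Hoffman's error bound for polyhedra.
-/

open scoped RealInnerProductSpace
open PointedCone

theorem coe_hull_range_eq_image {ι : Type*} [Fintype ι] (v : ι → E) :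
    (hull ℝ (range v) : Set E) = Fintype.linearCombination ℝ v '' Ici 0 := by
  ext x
  simp only [SetLike.mem_coe, Submodule.mem_span_range_iff_exists_fun, mem_image, mem_Ici,
    Fintype.linearCombination_apply]
  constructor
  · rintro ⟨c, rfl⟩
    exact ⟨fun i => c i, fun i => (c i).2, rfl⟩
  · rintro ⟨c, hc, rfl⟩
    exact ⟨fun i => ⟨c i, hc i⟩, rfl⟩

theorem mem_hull_finset_iff {s : Finset E} {x : E} :
    x ∈ hull ℝ (s : Set E) ↔ ∃ c : E → ℝ, (∀ v ∈ s, 0 ≤ c v) ∧ ∑ v ∈ s, c v • v = x := by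
  classical
  rw [Submodule.mem_span_finset]
  constructor
  · rintro ⟨c, -, rfl⟩
    exact ⟨fun v => c v, fun v _ => (c v).2, rfl⟩
  · rintro ⟨c, hc, rfl⟩
    refine ⟨fun v => if hv : v ∈ s then ⟨c v, hc v hv⟩ else 0, fun v hv => ?_,
      Finset.sum_congr rfl fun v hv => by simp [hv]⟩
    by_contra hvs
    exact hv (dif_neg hvs)

theorem exists_mem_hull_erase_of_not_linearIndepOn [DecidableEq E] {s : Finset E} {x : E}
    (hx : x ∈ hull ℝ (s : Set E)) (hs : ¬LinearIndepOn ℝ id (s : Set E)) :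
    ∃ v ∈ s, x ∈ hull ℝ (s.erase v : Set E) := by
  obtain ⟨c, hc, rfl⟩ := mem_hull_finset_iff.1 hx
  obtain ⟨f, hf, w, hws, hfw⟩ : ∃ f : E → ℝ, ∑ v ∈ s, f v • v = 0 ∧ ∃ v ∈ s, f v ≠ 0 := by
    simpa [linearIndepOn_finset_iff] using hs
  -- Moving along the relation `f` until the first coefficient vanishes keeps all others `≥ 0`.
  obtain ⟨v₀, hv₀, hmin⟩ := (s.filter (f · ≠ 0)).exists_min_image (fun v => c v / |f v|)
    ⟨w, Finset.mem_filter.2 ⟨hws, hfw⟩⟩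
  simp only [Finset.mem_filter] at hv₀ hmin
  set r := c v₀ / f v₀
  have hcoef : ∀ v ∈ s, 0 ≤ c v - r * f v := by
    intro v hv
    by_cases hfv : f v = 0
    · simpa [hfv] using hc v hv
    · have hr : |r| ≤ c v / |f v| := by
        rw [abs_div, abs_of_nonneg (hc v₀ hv₀.1)]
        exact hmin v ⟨hv, hfv⟩
      have := (le_div_iff₀ (abs_pos.2 hfv)).1 hr
      nlinarith [le_abs_self (r * f v), abs_mul r (f v)]
  refine ⟨v₀, hv₀.1, mem_hull_finset_iff.2 ⟨fun v => c v - r * f v,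
    fun v hv => hcoef v (Finset.mem_of_mem_erase hv), ?_⟩⟩
  rw [Finset.sum_erase _ (by simp [r, div_mul_cancel₀ _ hv₀.2])]
  simp only [sub_smul, Finset.sum_sub_distrib, mul_smul, ← Finset.smul_sum, hf, smul_zero,
    sub_zero]

theorem exists_linearIndepOn_subset_mem_hull (s : Finset E) {x : E}
    (hx : x ∈ hull ℝ (s : Set E)) :
    ∃ t ⊆ s, LinearIndepOn ℝ id (t : Set E) ∧ x ∈ hull ℝ (t : Set E) := by
  classical
  induction s using Finset.strongInduction with
  | H s ih =>
    by_cases hs : LinearIndepOn ℝ id (s : Set E)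
    · exact ⟨s, subset_rfl, hs, hx⟩
    · obtain ⟨v, hv, hxv⟩ := exists_mem_hull_erase_of_not_linearIndepOn hx hs
      obtain ⟨t, hts, ht, hxt⟩ := ih _ (Finset.erase_ssubset hv) hxv
      exact ⟨t, hts.trans (Finset.erase_subset _ _), ht, hxt⟩

theorem LinearIndependent.isClosed_hull_range {ι : Type*} [Fintype ι] {v : ι → E}
    (hv : LinearIndependent ℝ v) : IsClosed (hull ℝ (range v) : Set E) := by
  rw [coe_hull_range_eq_image]
  exact (LinearMap.isClosedEmbedding_of_injective (LinearMap.ker_eq_bot.2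
    hv.fintypeLinearCombination_injective)).isClosedMap _ isClosed_Ici

theorem isClosed_hull_finset (s : Finset E) : IsClosed (hull ℝ (s : Set E) : Set E) := by
  classical
  have hunion : (hull ℝ (s : Set E) : Set E) =
      ⋃ (t : Finset E)
        (_ : t ∈ s.powerset.filter fun t : Finset E => LinearIndepOn ℝ id (t : Set E)),
        (hull ℝ (t : Set E) : Set E) := by
    refine Subset.antisymm (fun x hx => ?_) (iUnion₂_subset fun t ht => ?_)
    · obtain ⟨t, hts, ht, hxt⟩ := exists_linearIndepOn_subset_mem_hull s hx
      exact mem_biUnion (Finset.mem_filter.2 ⟨Finset.mem_powerset.2 hts, ht⟩) hxt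
    · exact Submodule.span_mono (Finset.coe_subset.2 (Finset.mem_powerset.1
        (Finset.mem_filter.1 ht).1))
  rw [hunion]
  refine isClosed_biUnion_finset fun t ht => ?_
  simpa using LinearIndependent.isClosed_hull_range (Finset.mem_filter.1 ht).2

theorem mem_hull_of_forall_inner_nonpos [CompleteSpace E] (s : Finset E) {x : E}
    (h : ∀ d, (∀ v ∈ s, ⟪v, d⟫ ≤ 0) → ⟪x, d⟫ ≤ 0) : x ∈ hull ℝ (s : Set E) := by
  by_contra hx
  let C : ProperCone ℝ E := ⟨hull ℝ (s : Set E), isClosed_hull_finset s⟩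
  obtain ⟨y, hy, hxy⟩ := C.hyperplane_separation' hx
  have := h (-y) fun v hv => by simpa [inner_neg_right] using hy v (subset_hull hv)
  rw [inner_neg_right] at this
  linarith

theorem LinearIndependent.exists_norm_le_of_mem_hull {ι : Type*} [Fintype ι] {v : ι → E}
    (hv : LinearIndependent ℝ v) : ∃ C, ∀ g ∈ hull ℝ (range v), ∀ δ, 0 ≤ δ →
      (∀ i, ⟪v i, g⟫ ≤ δ) → ‖g‖ ≤ C * δ := by
  obtain ⟨K, -, hK⟩ := (Fintype.linearCombination ℝ v).exists_antilipschitzWith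
    (LinearMap.ker_eq_bot.2 hv.fintypeLinearCombination_injective)
  refine ⟨Fintype.card ι * K, fun g hg δ hδ hgδ => ?_⟩
  rw [← SetLike.mem_coe, coe_hull_range_eq_image] at hg
  obtain ⟨c, hc, rfl⟩ := hg
  have hgc := Fintype.linearCombination_apply ℝ v c
  set g := Fintype.linearCombination ℝ v c
  have hcoef : ∑ i, c i ≤ Fintype.card ι * K * ‖g‖ := calc
    ∑ i, c i ≤ ∑ _i : ι, ‖c‖ :=
        Finset.sum_le_sum fun i _ => (le_abs_self _).trans (norm_le_pi_norm c i)
    _ = Fintype.card ι * ‖c‖ := by simp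
    _ ≤ Fintype.card ι * (K * ‖g‖) := by
        gcongr
        simpa using hK.le_mul_dist c 0
    _ = Fintype.card ι * K * ‖g‖ := by ring
  have hsq : ‖g‖ * ‖g‖ ≤ Fintype.card ι * K * δ * ‖g‖ := calc
    ‖g‖ * ‖g‖ = ⟪∑ i, c i • v i, g⟫ := by rw [← hgc, real_inner_self_eq_norm_mul_norm]
    _ = ∑ i, c i * ⟪v i, g⟫ := by simp only [sum_inner, real_inner_smul_left]
    _ ≤ ∑ i, c i * δ := Finset.sum_le_sum fun i _ => mul_le_mul_of_nonneg_left (hgδ i) (hc i)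
    _ = (∑ i, c i) * δ := by rw [Finset.sum_mul]
    _ ≤ Fintype.card ι * K * ‖g‖ * δ := by gcongr
    _ = Fintype.card ι * K * δ * ‖g‖ := by ring
  rcases (norm_nonneg g).eq_or_lt with hg0 | hg0
  · rw [← hg0]; positivity
  · exact le_of_mul_le_mul_right hsq hg0

theorem exists_forall_subset_norm_le_of_mem_hull (s : Finset E) :
    ∃ C, ∀ t ⊆ s, LinearIndepOn ℝ id (t : Set E) → ∀ g ∈ hull ℝ (t : Set E), ∀ δ, 0 ≤ δ →
      (∀ v ∈ t, ⟪v, g⟫ ≤ δ) → ‖g‖ ≤ C * δ := by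
  classical
  have hbound (t : Finset E) : ∃ C, LinearIndepOn ℝ id (t : Set E) →
      ∀ g ∈ hull ℝ (t : Set E), ∀ δ, 0 ≤ δ → (∀ v ∈ t, ⟪v, g⟫ ≤ δ) → ‖g‖ ≤ C * δ := by
    by_cases ht : LinearIndepOn ℝ id (t : Set E)
    · obtain ⟨C, hC⟩ := LinearIndependent.exists_norm_le_of_mem_hull ht
      exact ⟨C, fun _ g hg δ hδ hgδ => hC g (by simpa using hg) δ hδ fun v => hgδ v v.2⟩
    · exact ⟨0, fun h => absurd h ht⟩
  choose C hC using hbound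
  obtain ⟨M, hM⟩ := (s.powerset.image C).exists_le
  exact ⟨M, fun t hts ht g hg δ hδ hgδ => (hC t ht g hg δ hδ hgδ).trans <|
    mul_le_mul_of_nonneg_right (hM _ (Finset.mem_image_of_mem _ (Finset.mem_powerset.2 hts))) hδ⟩

section Polyhedron

variable {ι : Type*} (a : ι → E) (β : ι → ℝ)

def polyhedron : Set E := {y | ∀ i, ⟪a i, y⟫ ≤ β i}

noncomputable def activeNormals [Fintype ι] (y : E) : Finset E := by
  classical
  exact (Finset.univ.filter fun i => ⟪a i, y⟫ = β i).image a

theorem convex_polyhedron : Convex ℝ (polyhedron a β) := by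
  simp only [polyhedron, ofPred_forall]
  exact convex_iInter fun i => convex_halfSpace_le (innerₗ E (a i)).isLinear (β i)

theorem isClosed_polyhedron : IsClosed (polyhedron a β) := by
  simp only [polyhedron, ofPred_forall]
  exact isClosed_iInter fun i => isClosed_le (by fun_prop) continuous_const

variable {a β}

theorem exists_pos_add_smul_mem_polyhedron [Finite ι] {y d : E} (hy : y ∈ polyhedron a β)
    (hd : ∀ i, ⟪a i, y⟫ = β i → ⟪a i, d⟫ ≤ 0) : ∃ τ > (0 : ℝ), y + τ • d ∈ polyhedron a β := by
  have h (i : ι) : ∀ᶠ τ in nhdsWithin (0 : ℝ) (Ioi 0), ⟪a i, y + τ • d⟫ ≤ β i := by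
    simp only [inner_add_right, real_inner_smul_right]
    rcases (hy i).eq_or_lt with hi | hi
    · filter_upwards [self_mem_nhdsWithin] with τ hτ
      nlinarith [hd i hi, mem_Ioi.1 hτ]
    · have hcont : ContinuousAt (fun τ : ℝ => ⟪a i, y⟫ + τ * ⟪a i, d⟫) 0 := by fun_prop
      exact nhdsWithin_le_nhds ((hcont.eventually_lt continuousAt_const (by simpa using hi)).mono
        fun _ => le_of_lt)
  obtain ⟨τ, hτ, hτ0⟩ := ((Filter.eventually_all.2 h).and self_mem_nhdsWithin).exists
  exact ⟨τ, hτ0, hτ⟩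

theorem mem_hull_activeNormals_of_forall_inner_sub_nonpos [CompleteSpace E] [Fintype ι]
    {y g : E} (hy : y ∈ polyhedron a β) (hg : ∀ w ∈ polyhedron a β, ⟪g, w - y⟫ ≤ 0) :
    g ∈ hull ℝ (activeNormals a β y : Set E) := by
  classical
  refine mem_hull_of_forall_inner_nonpos _ fun d hd => ?_
  obtain ⟨τ, hτ, hmem⟩ := exists_pos_add_smul_mem_polyhedron hy fun i hi =>
    hd (a i) (Finset.mem_image_of_mem a (by simpa using hi))
  have := hg _ hmem
  rw [add_sub_cancel_left, real_inner_smul_right] at this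
  exact nonpos_of_mul_nonpos_right this hτ

end Polyhedron

theorem polyhedron_sumElim_neg {ι κ : Type*} (a : ι → E) (c : κ → E) (β : ι → ℝ) (γ : κ → ℝ) :
    polyhedron (Sum.elim a (Sum.elim c (-c))) (Sum.elim β (Sum.elim γ (-γ))) =
      polyhedron a β ∩ {y | ∀ k, ⟪c k, y⟫ = γ k} := by
  ext y
  simp only [polyhedron, Sum.forall, Sum.elim_inl, Sum.elim_inr, Pi.neg_apply, inner_neg_left,
    neg_le_neg_iff, mem_inter_iff, mem_ofPred_eq, le_antisymm_iff, forall_and]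

section Hoffman

variable [CompleteSpace E] {ι κ : Type*} [Fintype ι] [Fintype κ]

theorem exists_hoffman_constant (a : ι → E) : ∃ L > (0 : ℝ), ∀ (β : ι → ℝ) (x : E) (δ : ℝ),
    (polyhedron a β).Nonempty → 0 ≤ δ → (∀ i, ⟪a i, x⟫ - β i ≤ δ) →
      ∃ y ∈ polyhedron a β, ‖x - y‖ ≤ L * δ := by
  classical
  obtain ⟨C, hC⟩ := exists_forall_subset_norm_le_of_mem_hull (Finset.univ.image a)
  refine ⟨max C 1, by positivity, fun β x δ hne hδ hx => ?_⟩
  obtain ⟨y, hy, hproj⟩ := exists_norm_eq_iInf_of_complete_convex hne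
    (isClosed_polyhedron a β).isComplete (convex_polyhedron a β) x
  have hnormal := mem_hull_activeNormals_of_forall_inner_sub_nonpos hy
    ((norm_eq_iInf_iff_real_inner_le_zero (convex_polyhedron a β) hy).1 hproj)
  obtain ⟨t, hts, ht, hxt⟩ := exists_linearIndepOn_subset_mem_hull _ hnormal
  have hviolation : ∀ v ∈ t, ⟪v, x - y⟫ ≤ δ := by
    intro v hv
    obtain ⟨i, hi, rfl⟩ := Finset.mem_image.1 (hts hv)
    rw [inner_sub_right, (Finset.mem_filter.1 hi).2]
    exact hx i
  refine ⟨y, hy, (hC t (hts.trans ?_) ht _ hxt δ hδ hviolation).trans ?_⟩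
  · exact Finset.image_subset_image (Finset.filter_subset _ _)
  · gcongr
    exact le_max_left _ _

theorem exists_hoffman_constant_of_eq (a : ι → E) (c : κ → E) :
    ∃ L > (0 : ℝ), ∀ (β : ι → ℝ) (γ : κ → ℝ) (x : E) (δ : ℝ),
      (polyhedron a β ∩ {y | ∀ k, ⟪c k, y⟫ = γ k}).Nonempty → 0 ≤ δ →
      (∀ i, ⟪a i, x⟫ - β i ≤ δ) → (∀ k, |⟪c k, x⟫ - γ k| ≤ δ) →
        ∃ y ∈ polyhedron a β ∩ {y | ∀ k, ⟪c k, y⟫ = γ k}, ‖x - y‖ ≤ L * δ := by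
  obtain ⟨L, hL, hoff⟩ := exists_hoffman_constant (Sum.elim a (Sum.elim c (-c)))
  refine ⟨L, hL, fun β γ x δ hne hδ ha hc => ?_⟩
  rw [← polyhedron_sumElim_neg] at hne ⊢
  refine hoff _ x δ hne hδ ?_
  rintro (i | k | k)
  · exact ha i
  · exact (le_abs_self _).trans (hc k)
  · have := (neg_le_abs (⟪c k, x⟫ - γ k)).trans (hc k)
    simp only [Sum.elim_inr, Pi.neg_apply, inner_neg_left]
    linarith

end Hoffman

theorem polarCone_conicCombinations {ι : Type*} [Fintype ι] (v : ι → E) :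
    polarCone {x | ∃ c : ι → ℝ, (∀ i, 0 ≤ c i) ∧ x = ∑ i, c i • v i} = polyhedron v 0 := by
  classical
  ext μ
  refine ⟨fun hμ i => ?_, fun hμ k ⟨c, hc, hk⟩ => ?_⟩
  · rw [real_inner_comm]
    exact hμ _ ⟨Pi.single i 1, fun j => by by_cases h : j = i <;> simp [h], by simp⟩
  · rw [hk, inner_sum]
    exact Finset.sum_nonpos fun i _ => by
      rw [real_inner_smul_right, real_inner_comm]
      exact mul_nonpos_of_nonneg_of_nonpos (hc i) (hμ i)

theorem walkup_wets_lipschitz_general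
    {E X : Type*} [NormedAddCommGroup E] [InnerProductSpace ℝ E] [FiniteDimensional ℝ E]
    [NormedAddCommGroup X] [InnerProductSpace ℝ X] [FiniteDimensional ℝ X]
    (K : Set E) (m : ℕ) (gen : Fin m → E)
    (hK : K = {x | ∃ c : Fin m → ℝ, (∀ i, 0 ≤ c i) ∧ x = ∑ i, c i • gen i})
    (s : E) (A : X →L[ℝ] E)
    (S : X → Set E)
    (hS : ∀ b, S b = {μ | μ ∈ polarCone K ∧ @inner ℝ _ _ μ s = (0 : ℝ) ∧
        ContinuousLinearMap.adjoint A μ = b}) :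
    ∃ L > (0 : ℝ), ∀ b₁ b₂ : X, (S b₁).Nonempty → (S b₂).Nonempty →
      ∀ μ₁ ∈ S b₁, ∃ μ₂ ∈ S b₂, ‖μ₁ - μ₂‖ ≤ L * ‖b₁ - b₂‖ := by
  let e := stdOrthonormalBasis ℝ X
  let c : Option (Fin (Module.finrank ℝ X)) → E := fun o => o.elim s fun k => A (e k)
  let γ (b : X) : Option (Fin (Module.finrank ℝ X)) → ℝ := fun o => o.elim 0 fun k => ⟪e k, b⟫
  have hSb (b : X) : S b = polyhedron gen 0 ∩ {μ | ∀ o, ⟪c o, μ⟫ = γ b o} := by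
    ext μ
    have hadj : ContinuousLinearMap.adjoint A μ = b ↔ ∀ k, ⟪A (e k), μ⟫ = ⟪e k, b⟫ := by
      simp only [← ContinuousLinearMap.adjoint_inner_right]
      exact ⟨fun h k => h ▸ rfl, InnerProductSpace.ext_inner_left_basis e.toBasis ∘ by simp⟩
    simp only [hS, hK, polarCone_conicCombinations, mem_inter_iff, mem_ofPred_eq, Option.forall,
      c, γ, Option.elim, hadj, real_inner_comm s]
  obtain ⟨L, hL, hoff⟩ := exists_hoffman_constant_of_eq gen c
  refine ⟨L, hL, fun b₁ b₂ _ hne₂ μ₁ hμ₁ => ?_⟩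
  rw [hSb] at hne₂ hμ₁ ⊢
  refine hoff 0 (γ b₂) μ₁ ‖b₁ - b₂‖ hne₂ (norm_nonneg _)
    (fun i => (sub_nonpos.2 (hμ₁.1 i)).trans (norm_nonneg _)) ?_
  rintro (_ | k)
  · simp [hμ₁.2 none, γ]
  · rw [hμ₁.2 (some k)]
    simpa [γ, ← inner_sub_right, e.orthonormal.1 k] using abs_real_inner_le_norm (e k) (b₁ - b₂)

/-- Walkup–Wets: for a polyhedral (finitely generated) closed
convex cone `K`, `s ∈ K`, and a linear map `A : X → E`, the mapping
`S(b*) = {μ ∈ K* ∩ {s}ᗮ : A* μ = b*}` is Lipschitz continuous for the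
Hausdorff distance on its domain: there is `L > 0` with
`S(b₁*) ⊆ S(b₂*) + L ‖b₁* - b₂*‖ B` whenever both values are nonempty. -/
theorem walkup_wets_lipschitz
    {E X : Type*} [NormedAddCommGroup E] [InnerProductSpace ℝ E] [FiniteDimensional ℝ E]
    [NormedAddCommGroup X] [InnerProductSpace ℝ X] [FiniteDimensional ℝ X]
    (K : Set E) (m : ℕ) (gen : Fin m → E)
    (hK : K = {x | ∃ c : Fin m → ℝ, (∀ i, 0 ≤ c i) ∧ x = ∑ i, c i • gen i})
    (s : E) (hs : s ∈ K) (A : X →L[ℝ] E)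
    (S : X → Set E)
    (hS : ∀ b, S b = {μ | μ ∈ polarCone K ∧ @inner ℝ _ _ μ s = (0 : ℝ) ∧
        ContinuousLinearMap.adjoint A μ = b}) :
    ∃ L > (0 : ℝ), ∀ b₁ b₂ : X, (S b₁).Nonempty → (S b₂).Nonempty →
      ∀ μ₁ ∈ S b₁, ∃ μ₂ ∈ S b₂, ‖μ₁ - μ₂‖ ≤ L * ‖b₁ - b₂‖ :=
  walkup_wets_lipschitz_general K m gen hK s A S hS
end

section
/- Let h : V → E be C² near ȳ with h(ȳ) = 0 and ∇h(ȳ) surjective, K ⊆ E a closed convex cone, and C ∩ V = {y ∈ V : h(y) ∈ K}. If λ̄ ∈ ri N_C(ȳ) where N_C(ȳ) = ∇h(ȳ)* K*, then the unique μ̄ with ∇h(ȳ)* μ̄ = λ̄ satisfies μ̄ ∈ ri K*. In other words, strict complementarity is preserved under the C² cone reduction. -/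
open Set
open scoped Pointwise

variable {E : Type*} [NormedAddCommGroup E] [InnerProductSpace ℝ E]

theorem image_intrinsicInterior_subset_of_equiv
    {F G : Type*} [NormedAddCommGroup F] [NormedSpace ℝ F]
    [NormedAddCommGroup G] [NormedSpace ℝ G] (e : F ≃L[ℝ] G) (s : Set F) :
    e '' intrinsicInterior ℝ s ⊆ intrinsicInterior ℝ (e '' s) := by
  rintro _ ⟨x, hx, rfl⟩
  rw [intrinsicInterior] at hx ⊢
  obtain ⟨y, hy, rfl⟩ := hx
  have hmap : ∀ z : F, z ∈ affineSpan ℝ s → e z ∈ affineSpan ℝ (e '' s) := by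
    intro z hz
    have hms := AffineSubspace.map_span (e.toLinearEquiv.toLinearMap.toAffineMap) s
    rw [show ⇑(e.toLinearEquiv.toLinearMap.toAffineMap) = ⇑e from rfl] at hms
    rw [← hms]
    exact AffineSubspace.mem_map.2 ⟨z, hz, rfl⟩
  have hmap' : ∀ z : G, z ∈ affineSpan ℝ (e '' s) → e.symm z ∈ affineSpan ℝ s := by
    intro z hz
    have hms := AffineSubspace.map_span (e.symm.toLinearEquiv.toLinearMap.toAffineMap) (e '' s)
    have h2 : e.symm '' (e '' s) = s := by
      rw [← Set.image_comp]; simp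
    rw [show ⇑(e.symm.toLinearEquiv.toLinearMap.toAffineMap) = ⇑e.symm from rfl, h2] at hms
    rw [← hms]
    exact AffineSubspace.mem_map.2 ⟨z, hz, rfl⟩
  let g : (affineSpan ℝ s : Set F) ≃ₜ (affineSpan ℝ (e '' s) : Set G) :=
    { toFun := fun y => ⟨e y, hmap y y.2⟩
      invFun := fun z => ⟨e.symm z, hmap' z z.2⟩
      left_inv := fun y => by ext; simp
      right_inv := fun z => by ext; simp
      continuous_toFun := (e.continuous.comp continuous_subtype_val).subtype_mk _
      continuous_invFun := (e.symm.continuous.comp continuous_subtype_val).subtype_mk _ }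
  have hpre : g ⁻¹' ((↑) ⁻¹' (e '' s)) = ((↑) ⁻¹' s : Set (affineSpan ℝ s)) := by
    ext y
    simp only [mem_preimage, g, Homeomorph.homeomorph_mk_coe, Equiv.coe_fn_mk]
    exact e.injective.mem_set_image
  have hgy : g y ∈ interior ((↑) ⁻¹' (e '' s) : Set (affineSpan ℝ (e '' s))) := by
    rw [← hpre, ← g.preimage_interior] at hy
    exact hy
  exact ⟨g y, hgy, rfl⟩

theorem image_intrinsicInterior_equiv
    {F G : Type*} [NormedAddCommGroup F] [NormedSpace ℝ F]
    [NormedAddCommGroup G] [NormedSpace ℝ G] (e : F ≃L[ℝ] G) (s : Set F) :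
    intrinsicInterior ℝ (e '' s) = e '' intrinsicInterior ℝ s := by
  refine subset_antisymm ?_ (image_intrinsicInterior_subset_of_equiv e s)
  intro x hx
  have h2 : e.symm '' (e '' s) = s := by rw [← Set.image_comp]; simp
  have := image_intrinsicInterior_subset_of_equiv e.symm (e '' s) ⟨x, hx, rfl⟩
  rw [h2] at this
  exact ⟨e.symm x, this, by simp⟩

theorem image_intrinsicInterior_of_injective
    {F G : Type*} [NormedAddCommGroup F] [NormedSpace ℝ F] [FiniteDimensional ℝ F]
    [NormedAddCommGroup G] [NormedSpace ℝ G] (f : F →L[ℝ] G)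
    (hf : Function.Injective f) (s : Set F) :
    intrinsicInterior ℝ (f '' s) = f '' intrinsicInterior ℝ s := by
  set p := LinearMap.range (f : F →ₗ[ℝ] G) with hp
  let e : F ≃L[ℝ] p := (LinearEquiv.ofInjective (f : F →ₗ[ℝ] G) hf).toContinuousLinearEquiv
  have hfac : ∀ x : F, f x = (p.subtypeₗᵢ : p →ₗᵢ[ℝ] G) (e x) := fun x => rfl
  have himg : ∀ t : Set F, f '' t = (p.subtypeₗᵢ.toAffineIsometry) '' (e '' t) := by
    intro t
    rw [← Set.image_comp]
    exact Set.image_congr fun x _ => hfac x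
  rw [himg, AffineIsometry.image_intrinsicInterior, image_intrinsicInterior_equiv, ← himg]

/-- strict complementarity is preserved under the `C²` cone
reduction. If `λ̄ ∈ ri N_C(ȳ)` where `N_C(ȳ) = ∇h(ȳ)* K*`, then the (unique)
`μ̄` with `∇h(ȳ)* μ̄ = λ̄` satisfies `μ̄ ∈ ri K*`. -/
theorem strict_complementarity_reduction
    {Y E : Type*} [NormedAddCommGroup Y] [InnerProductSpace ℝ Y] [FiniteDimensional ℝ Y]
    [NormedAddCommGroup E] [InnerProductSpace ℝ E] [FiniteDimensional ℝ E]
    (C : Set Y) (hC : IsClosed C) (y0 : Y) (hy0 : y0 ∈ C)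
    (V : Set Y) (hVopen : IsOpen V) (hy0V : y0 ∈ V)
    (h : Y → E) (hh : ContDiffOn ℝ 2 h V) (hh0 : h y0 = 0)
    (hsurj : Function.Surjective (fderiv ℝ h y0))
    (K : Set E) (hKclosed : IsClosed K) (hKconv : Convex ℝ K)
    (hKcone : ∀ t : ℝ, 0 ≤ t → ∀ x ∈ K, t • x ∈ K) (hK0 : (0 : E) ∈ K)
    (hred : C ∩ V = {y ∈ V | h y ∈ K})
    (lam : Y)
    (hlam : lam ∈ intrinsicInterior ℝ
        (ContinuousLinearMap.adjoint (fderiv ℝ h y0) '' polarCone K))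
    (μ : E) (hμ : ContinuousLinearMap.adjoint (fderiv ℝ h y0) μ = lam) :
    μ ∈ intrinsicInterior ℝ (polarCone K) := by
  set A := fderiv ℝ h y0 with hA
  set f := ContinuousLinearMap.adjoint A with hf
  have hinj : Function.Injective f := by
    intro a b hab
    have h0 : f (a - b) = 0 := by rw [map_sub, hab, sub_self]
    obtain ⟨x, hx⟩ := hsurj (a - b)
    have h1 : @inner ℝ _ _ (a - b) (a - b) = 0 := by
      calc @inner ℝ _ _ (a - b) (a - b) = @inner ℝ _ _ (a - b) (A x) := by rw [hx]
        _ = @inner ℝ _ _ (f (a - b)) x := by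
              rw [hf, ContinuousLinearMap.adjoint_inner_left]
        _ = 0 := by rw [h0, inner_zero_left]
    exact sub_eq_zero.1 (inner_self_eq_zero.1 h1)
  rw [image_intrinsicInterior_of_injective f hinj] at hlam
  obtain ⟨μ', hμ', hμ'eq⟩ := hlam
  have : μ' = μ := hinj (by rw [hμ'eq, ← hμ])
  rwa [← this]
end
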